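/- (Z-measurement rule for phase-encoded graph states.) Let G be a finite simple graph on Fin n, let i be a vertex, r ∈ (ZMod 2)^n, and m ∈ ZMod 2. Then contracting qubit i of Z^r|G⟩ against the standard basis vector e_m yields exactly ⟨m|_i (Z^r|G⟩) = 2^{−1/2} · (−1)^{r_i·m} · (∏_{j ∈ N(i)} Z_j^{m}) · Z^{r'} |G − i⟩, where G − i is the induced subgraph of G on the remaining n−1 vertices, r' is the restriction of r to those vertices, and the Z operators act on the (n−1)-qubit space. -/

import Mathlib

open Matrix
open scoped BigOperators

noncomputable section

/-- `(-1)^c` as a complex number, for `c : ZMod 2`. -/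
def sgn (c : ZMod 2) : ℂ := if c = 0 then 1 else -1

/-- Pauli `X = !![0,1;1,0]`, indexed by `ZMod 2`. -/
def PX : Matrix (ZMod 2) (ZMod 2) ℂ := fun a b => if a = b then 0 else 1

/-- Pauli `Y = !![0,−i;i,0]`, indexed by `ZMod 2`. -/
def PY : Matrix (ZMod 2) (ZMod 2) ℂ :=
  fun a b => if a = b then 0 else if a = 0 then -Complex.I else Complex.I

/-- Pauli `Z = !![1,0;0,−1]`, indexed by `ZMod 2`. -/
def PZ : Matrix (ZMod 2) (ZMod 2) ℂ := fun a b => if a = b then sgn a else 0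

/-- The tensor (Kronecker) product over all qubits of a family of single-qubit
operators: the `(x, y)` entry is `∏ i, (f i) (x i) (y i)`. -/
def tensorOp {V : Type*} [Fintype V] (f : V → Matrix (ZMod 2) (ZMod 2) ℂ) :
    Matrix (V → ZMod 2) (V → ZMod 2) ℂ :=
  fun x y => ∏ i, f i (x i) (y i)

/-- The operator acting as `A` on qubit `i` and as the identity on all other qubits. -/
def localOp {V : Type*} [Fintype V] [DecidableEq V] (i : V)
    (A : Matrix (ZMod 2) (ZMod 2) ℂ) : Matrix (V → ZMod 2) (V → ZMod 2) ℂ :=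
  tensorOp (fun j => if j = i then A else 1)

/-- `Σ_{{i,j} ∈ E(G)} x_i x_j`, as an element of `ZMod 2`. -/
def edgePhase {V : Type*} [Fintype V] [DecidableEq V] (G : SimpleGraph V)
    [DecidableRel G.Adj] (x : V → ZMod 2) : ZMod 2 :=
  ∑ e ∈ G.edgeFinset, Sym2.lift ⟨fun i j => x i * x j, fun _ _ => mul_comm _ _⟩ e

/-- The graph state `|G⟩`, with amplitudes `⟨x|G⟩ = 2^{-n/2}·(−1)^{Σ_{{i,j}∈E(G)} x_i x_j}`. -/
def graphState {V : Type*} [Fintype V] [DecidableEq V] (G : SimpleGraph V)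
    [DecidableRel G.Adj] : (V → ZMod 2) → ℂ :=
  fun x => (Real.sqrt 2 : ℂ)⁻¹ ^ (Fintype.card V) * sgn (edgePhase G x)

/-- The entangling unitary `U_G = ∏_{{i,j} ∈ E(G)} CZ_{i,j}`: the diagonal matrix with
`(x,x)` entry `(−1)^{Σ_{{i,j}∈E(G)} x_i x_j}`. -/
def entangler {V : Type*} [Fintype V] [DecidableEq V] (G : SimpleGraph V)
    [DecidableRel G.Adj] : Matrix (V → ZMod 2) (V → ZMod 2) ℂ :=
  Matrix.diagonal (fun x => sgn (edgePhase G x))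

/-- The correlation operator `K_i = X_i ∏_{j ∈ N(i)} Z_j`. -/
def corrOp {V : Type*} [Fintype V] [DecidableEq V] (G : SimpleGraph V)
    [DecidableRel G.Adj] (i : V) : Matrix (V → ZMod 2) (V → ZMod 2) ℂ :=
  tensorOp (fun j => if j = i then PX else if G.Adj i j then PZ else 1)

/-- `Z^r = ∏_i Z_i^{r_i}` for `r ∈ (ZMod 2)^V`. -/
def Zop {V : Type*} [Fintype V] (r : V → ZMod 2) :
    Matrix (V → ZMod 2) (V → ZMod 2) ℂ :=
  tensorOp (fun i => PZ ^ (r i).val)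

/-- The rank-one outer product `|ψ⟩⟨ψ|`. -/
def outer {α : Type*} (ψ : α → ℂ) : Matrix α α ℂ := fun x y => ψ x * star (ψ y)


/-- The induced subgraph `G − i` on the remaining vertices. -/
def deleteVertex {n : ℕ} (G : SimpleGraph (Fin n)) (i : Fin n) :
    SimpleGraph {j : Fin n // j ≠ i} :=
  G.comap Subtype.val

instance {n : ℕ} (G : SimpleGraph (Fin n)) [h : DecidableRel G.Adj] (i : Fin n) :
    DecidableRel (deleteVertex G i).Adj := fun a b => h a.val b.val

/-!
`Z^r` is diagonal, with entry `(−1)^{Σ_j r_j x_j}` at `x`. Once `x_i = m` is fixed, the edge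
phase of `G` at `x` splits into the edges at `i`, which contribute `m · Σ_{j ∈ N(i)} x_j` and so
are the eigenvalue of `∏_{j ∈ N(i)} Z_j^m`, and the edges of `G − i`. Comparing the remaining
amplitudes with those of `|G − i⟩` leaves one normalisation factor `2^{−1/2}`.
-/

lemma ZMod.two_eq_zero_or_one (c : ZMod 2) : c = 0 ∨ c = 1 := by
  revert c; decide

lemma sgn_add (a b : ZMod 2) : sgn (a + b) = sgn a * sgn b := by
  rcases a.two_eq_zero_or_one with rfl | rfl <;> rcases b.two_eq_zero_or_one with rfl | rfl <;>
    simp [sgn, CharTwo.add_self_eq_zero]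

lemma sgn_sum {ι : Type*} (s : Finset ι) (f : ι → ZMod 2) :
    sgn (∑ j ∈ s, f j) = ∏ j ∈ s, sgn (f j) := by
  induction s using Finset.cons_induction with
  | empty => simp [sgn]
  | cons a s _ ih => rw [Finset.sum_cons, Finset.prod_cons, sgn_add, ih]

lemma PZ_pow_val_apply (v a b : ZMod 2) :
    (PZ ^ v.val) a b = if a = b then sgn (v * a) else 0 := by
  rcases v.two_eq_zero_or_one with rfl | rfl <;> simp [PZ, Matrix.one_apply, sgn, ZMod.val_one]

lemma Zop_eq_diagonal {V : Type*} [Fintype V] [DecidableEq V] (r : V → ZMod 2) :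
    Zop r = Matrix.diagonal (fun x => sgn (∑ j, r j * x j)) := by
  ext x y
  simp only [Zop, tensorOp, PZ_pow_val_apply, Finset.prod_ite_zero, Matrix.diagonal_apply,
    sgn_sum, Finset.mem_univ, true_implies]
  exact if_congr funext_iff.symm rfl rfl

section
variable {V : Type*} [Fintype V] [DecidableEq V] (G : SimpleGraph V) [DecidableRel G.Adj] (i : V)

lemma sum_edgeFinset_filter_mem {M : Type*} [AddCommMonoid M] (f : Sym2 V → M) :
    ∑ e ∈ G.edgeFinset with i ∈ e, f e
      = ∑ j ∈ Finset.univ.filter (fun j : {j // j ≠ i} => G.Adj i j), f s(i, j) := by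
  refine (Finset.sum_nbij (fun j : {j // j ≠ i} => s(i, j.val)) ?_ ?_ ?_ fun _ _ => rfl).symm
  · intro j hj
    simp_all
  · intro a _ b _ hab
    exact Subtype.ext (Sym2.congr_right.mp hab)
  · intro e he
    simp only [Finset.coe_filter, SimpleGraph.mem_edgeFinset, Set.mem_ofPred_eq] at he
    obtain ⟨j, rfl⟩ := Sym2.mem_iff_exists.mp he.2
    have hij : G.Adj i j := he.1
    exact ⟨⟨j, hij.ne'⟩, by simpa using hij, rfl⟩

lemma sum_edgeFinset_filter_notMem {M : Type*} [AddCommMonoid M] (f : Sym2 V → M) :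
    ∑ e ∈ G.edgeFinset with i ∉ e, f e
      = ∑ e ∈ (G.comap (Subtype.val : {j // j ≠ i} → V)).edgeFinset,
          f (e.map Subtype.val) := by
  refine (Finset.sum_nbij (Sym2.map Subtype.val) ?_
    (Sym2.map.injective Subtype.val_injective).injOn ?_ fun _ _ => rfl).symm
  · intro e he
    induction e using Sym2.ind with | _ a b =>
    simp only [SimpleGraph.mem_edgeFinset, SimpleGraph.mem_edgeSet, SimpleGraph.comap_adj] at he
    simp [he, Ne.symm a.prop, Ne.symm b.prop]
  · intro e he
    induction e using Sym2.ind with | _ a b =>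
    simp only [Finset.coe_filter, SimpleGraph.mem_edgeFinset, SimpleGraph.mem_edgeSet,
      Sym2.mem_iff, not_or, Set.mem_ofPred_eq] at he
    refine ⟨s(⟨a, Ne.symm he.2.1⟩, ⟨b, Ne.symm he.2.2⟩), ?_, rfl⟩
    simpa using he.1

lemma edgePhase_eq_add_edgePhase_comap (x : V → ZMod 2) :
    edgePhase G x = ∑ j : {j // j ≠ i}, (if G.Adj i j then x i else 0) * x j
      + edgePhase (G.comap (Subtype.val : {j // j ≠ i} → V)) (fun j => x j) := by
  rw [edgePhase, edgePhase, ← Finset.sum_filter_add_sum_filter_not _ (i ∈ ·),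
    sum_edgeFinset_filter_mem, sum_edgeFinset_filter_notMem, Finset.sum_filter]
  congr 1
  · simp only [ite_mul, zero_mul]
    rfl
  · refine Finset.sum_congr rfl fun e _ => ?_
    induction e using Sym2.ind
    rfl

end

lemma pow_card_eq_mul_pow_card_subtype_ne {V M : Type*} [Fintype V] [DecidableEq V]
    [CommMonoid M] (c : M) (i : V) : c ^ Fintype.card V = c * c ^ Fintype.card {j // j ≠ i} := by
  simpa using Fintype.prod_eq_mul_prod_subtype_ne (fun _ => c) i

/-- Z-measurement rule for phase-encoded graph states: contracting
qubit `i` of `Z^r|G⟩` against the standard basis vector `e_m` yields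
`⟨m|_i (Z^r|G⟩) = 2^{−1/2} · (−1)^{r_i·m} · (∏_{j ∈ N(i)} Z_j^m) · Z^{r'} |G − i⟩`,
where `r'` is the restriction of `r` to the remaining vertices. -/
theorem z_measurement_rule {n : ℕ} (G : SimpleGraph (Fin n)) [DecidableRel G.Adj]
    (i : Fin n) (r : Fin n → ZMod 2) (m : ZMod 2) :
    (fun y : {j : Fin n // j ≠ i} → ZMod 2 =>
        (Zop r).mulVec (graphState G) (fun j => if h : j = i then m else y ⟨j, h⟩))
      = (Real.sqrt 2 : ℂ)⁻¹ • sgn (r i * m) •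
          ((Zop (fun j : {j : Fin n // j ≠ i} => if G.Adj i j.val then m else 0) *
            Zop (fun j : {j : Fin n // j ≠ i} => r j.val)).mulVec
              (graphState (deleteVertex G i))) := by
  funext y
  set x : Fin n → ZMod 2 := fun j => if h : j = i then m else y ⟨j, h⟩
  have hxi : x i = m := dif_pos rfl
  have hxy (j : {j // j ≠ i}) : x j = y j := dif_neg j.prop
  have hphase : edgePhase G x
      = ∑ j : {j // j ≠ i}, (if G.Adj i j then m else 0) * y j
        + edgePhase (deleteVertex G i) y := by
    simp only [edgePhase_eq_add_edgePhase_comap G i x, hxi, hxy]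
    rfl
  rw [Zop_eq_diagonal, Zop_eq_diagonal, Zop_eq_diagonal, Matrix.diagonal_mul_diagonal]
  simp only [Matrix.mulVec_diagonal, graphState, Pi.smul_apply, smul_eq_mul]
  rw [Fintype.sum_eq_add_sum_subtype_ne _ i, hphase, pow_card_eq_mul_pow_card_subtype_ne _ i,
    sgn_add, sgn_add]
  simp only [hxi, hxy]
  ring
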